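/- Every nonempty Motzkin path without peaks or valleys can be written uniquely in exactly one of the forms HA, UA'D, or UA'DHA, where A is an arbitrary (possibly empty) Motzkin path without peaks or valleys and A' is a nonempty Motzkin path without peaks or valleys. -/

import Mathlib

/-- Steps of bargraphs / Motzkin paths. -/
inductive Step where
  | U : Step
  | H : Step
  | D : Step
deriving DecidableEq

/-- Vertical displacement of a step. -/
def Step.val : Step → ℤ
  | .U => 1
  | .H => 0
  | .D => -1

/-- Mirror of a step (swap U and D). -/
def Step.mirror : Step → Step
  | .U => .D
  | .H => .H
  | .D => .U

/-- Final height of a word. -/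
def hgt (w : List Step) : ℤ := (w.map Step.val).sum

/-- A Motzkin path prefix: never goes below the x-axis. -/
def IsMotzkinPrefix (w : List Step) : Prop := ∀ p : List Step, p <+: w → 0 ≤ hgt p

/-- A Motzkin path: never below the x-axis, ends at height 0. -/
def IsMotzkin (w : List Step) : Prop := IsMotzkinPrefix w ∧ hgt w = 0

/-- No peak `UD` and no valley `DU`. -/
def Cornerless (w : List Step) : Prop :=
  ¬ [Step.U, Step.D] <:+: w ∧ ¬ [Step.D, Step.U] <:+: w

/-- A bargraph: starts at the origin, ends on the x-axis, stays strictly above the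
x-axis except at the endpoints, and has no factor `UD` or `DU`. -/
def IsBargraph (w : List Step) : Prop :=
  2 ≤ w.length ∧ hgt w = 0 ∧
    (∀ p : List Step, p <+: w → p ≠ [] → p ≠ w → 0 < hgt p) ∧ Cornerless w

/-- Semiperimeter: number of `U` steps plus number of `H` steps. -/
def semi (w : List Step) : ℕ := w.count Step.U + w.count Step.H

/-- Length of the initial run of `U` steps. -/
def leadU : List Step → ℕ
  | Step.U :: rest => leadU rest + 1
  | _ => 0

/-- Length of the initial run of `H` steps. -/
def leadH : List Step → ℕ
  | Step.H :: rest => leadH rest + 1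
  | _ => 0

/-- Length of the initial run of `D` steps. -/
def leadD : List Step → ℕ
  | Step.D :: rest => leadD rest + 1
  | _ => 0

/-- Length of the first maximal run of `D` steps (0 if none). -/
def firstDescLen : List Step → ℕ
  | [] => 0
  | Step.D :: rest => leadD rest + 1
  | _ :: rest => firstDescLen rest

/-- Number of occurrences of the two-letter factor `a b`. -/
def cnt2 (a b : Step) : List Step → ℕ
  | x :: y :: rest => (if x = a ∧ y = b then 1 else 0) + cnt2 a b (y :: rest)
  | _ => 0

/-- Heights of the columns (`H` steps), starting from a given height. -/
def colHeights : ℤ → List Step → List ℤ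
  | _, [] => []
  | h, Step.U :: rest => colHeights (h + 1) rest
  | h, Step.H :: rest => h :: colHeights h rest
  | h, Step.D :: rest => colHeights (h - 1) rest

/-- Width of the leftmost maximal horizontal segment (0 if none). -/
def lhsW : List Step → ℕ
  | [] => 0
  | Step.H :: rest => leadH rest + 1
  | _ :: rest => lhsW rest

/-- Delete `h` steps at the start of the leftmost horizontal segment. -/
def stripLeadH (h : ℕ) : List Step → List Step
  | [] => []
  | Step.H :: rest => List.drop h (Step.H :: rest)
  | s :: rest => s :: stripLeadH h rest

/-- Number of initial columns of height 1: largest `j` such that the word begins `U H^j`. -/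
def iuc : List Step → ℕ
  | Step.U :: rest => leadH rest
  | _ => 0

/-- Number of maximal horizontal segments. -/
def hsCount : List Step → ℕ
  | [] => 0
  | [Step.H] => 1
  | [_] => 0
  | a :: b :: rest => (if a = Step.H ∧ b ≠ Step.H then 1 else 0) + hsCount (b :: rest)

/-- Mirror image: reverse the word and swap `U` with `D`. -/
def mir (w : List Step) : List Step := (w.reverse).map Step.mirror

/-- Shape of strictly alternating bargraphs:
`U^{i₁} H D^{k₁} H U^{i₂} H D^{k₂} H ⋯ U^{iₘ} H D^{kₘ}` with all `iᵣ, kᵣ ≥ 1`. -/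
inductive SAShape : List Step → Prop where
  | base (i k : ℕ) : 1 ≤ i → 1 ≤ k →
      SAShape (List.replicate i Step.U ++ [Step.H] ++ List.replicate k Step.D)
  | cons (i k : ℕ) (w : List Step) : 1 ≤ i → 1 ≤ k → SAShape w →
      SAShape (List.replicate i Step.U ++ [Step.H] ++ List.replicate k Step.D ++ [Step.H] ++ w)

/-- A strictly alternating bargraph. -/
def IsStrictAlt (w : List Step) : Prop := IsBargraph w ∧ SAShape w

/-- A secondary structure on `{0, …, m-1}`: all consecutive edges are present, every
vertex has at most one non-consecutive neighbour, and there are no crossing edges. -/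
def IsSecondaryStructure {m : ℕ} (G : SimpleGraph (Fin m)) : Prop :=
  (∀ i j : Fin m, (i : ℕ) + 1 = (j : ℕ) → G.Adj i j) ∧
  (∀ i j k : Fin m, G.Adj i j → G.Adj i k →
      (i : ℕ) + 1 ≠ (j : ℕ) → (j : ℕ) + 1 ≠ (i : ℕ) →
      (i : ℕ) + 1 ≠ (k : ℕ) → (k : ℕ) + 1 ≠ (i : ℕ) → j = k) ∧
  ¬ ∃ i j k l : Fin m, (i : ℕ) < (j : ℕ) ∧ (j : ℕ) < (k : ℕ) ∧ (k : ℕ) < (l : ℕ) ∧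
      G.Adj i k ∧ G.Adj j l

/-- Generating function of bargraphs: `x` (variable 0) marks `H` steps,
`y` (variable 1) marks `U` steps. -/
noncomputable def BG : MvPowerSeries (Fin 2) ℚ :=
  fun d => (Nat.card {w : List Step //
    IsBargraph w ∧ w.count Step.H = d 0 ∧ w.count Step.U = d 1} : ℚ)

/-- Generating function of cornerless Motzkin paths. -/
noncomputable def MG : MvPowerSeries (Fin 2) ℚ :=
  fun d => (Nat.card {w : List Step //
    IsMotzkin w ∧ Cornerless w ∧ w.count Step.H = d 0 ∧ w.count Step.U = d 1} : ℚ)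

/-- Generating function of bargraphs avoiding the factor `DH`. -/
noncomputable def BDH : MvPowerSeries (Fin 2) ℚ :=
  fun d => (Nat.card {w : List Step //
    IsBargraph w ∧ ¬ [Step.D, Step.H] <:+: w ∧
      w.count Step.H = d 0 ∧ w.count Step.U = d 1} : ℚ)

/-- Generating function of bargraphs avoiding the factors `DH` and `HH`. -/
noncomputable def BDHHH : MvPowerSeries (Fin 2) ℚ :=
  fun d => (Nat.card {w : List Step //
    IsBargraph w ∧ ¬ [Step.D, Step.H] <:+: w ∧ ¬ [Step.H, Step.H] <:+: w ∧
      w.count Step.H = d 0 ∧ w.count Step.U = d 1} : ℚ)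

/-- Generating function of cornerless Motzkin path prefixes ending at height `h`. -/
noncomputable def Pgf (h : ℕ) : MvPowerSeries (Fin 2) ℚ :=
  fun d => (Nat.card {w : List Step //
    IsMotzkinPrefix w ∧ Cornerless w ∧ hgt w = (h : ℤ) ∧
      w.count Step.H = d 0 ∧ w.count Step.U = d 1} : ℚ)

/-- Decomposition `G = U^a G₁ H G₂ D^a` of a strictly alternating bargraph. -/
def SADecomp (t : ℕ × List Step × List Step) (G : List Step) : Prop :=
  1 ≤ t.1 ∧ IsStrictAlt t.2.1 ∧ IsStrictAlt (Step.U :: (t.2.2 ++ [Step.D])) ∧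
    G = List.replicate t.1 Step.U ++ t.2.1 ++ [Step.H] ++ t.2.2 ++
      List.replicate t.1 Step.D

/-! A nonempty cornerless Motzkin path starting with `H` is `HA`. One starting with `U` splits
at its first return to the axis as `U A' D B` with `A'`, `B` Motzkin: `A'` is nonempty because
`UD` is a peak, and `B` is either empty or starts with `H`, since a `D` would go below the axis
and a `U` would make the valley `DU`. The first return is unique because a Motzkin path `A'`
cannot have `A'' D` as a prefix for another Motzkin path `A''`, which pins down the form. -/

@[simp] lemma hgt_nil : hgt [] = 0 := rfl

@[simp] lemma hgt_cons (s : Step) (w : List Step) : hgt (s :: w) = s.val + hgt w := by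
  simp [hgt]

@[simp] lemma hgt_append (v w : List Step) : hgt (v ++ w) = hgt v + hgt w := by
  simp [hgt]

lemma Step.neg_one_le_val (s : Step) : -1 ≤ s.val := by
  cases s <;> decide

lemma Step.val_eq_neg_one_iff {s : Step} : s.val = -1 ↔ s = .D := by
  cases s <;> decide

lemma Cornerless.of_infix {v w : List Step} (hw : Cornerless w) (h : v <:+: w) : Cornerless v :=
  ⟨fun hp => hw.1 (hp.trans h), fun hv => hw.2 (hv.trans h)⟩

lemma isMotzkinPrefix_iff_take {w : List Step} :
    IsMotzkinPrefix w ↔ ∀ n, 0 ≤ hgt (w.take n) :=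
  ⟨fun h n => h _ (w.take_prefix n), fun h _ hp => List.prefix_iff_eq_take.mp hp ▸ h _⟩

lemma not_isMotzkinPrefix_cons_D (w : List Step) : ¬ IsMotzkinPrefix (Step.D :: w) :=
  fun h => by simpa [Step.val] using h [Step.D] (by simp)

lemma IsMotzkinPrefix.of_append {v w : List Step} (h : IsMotzkinPrefix (v ++ w))
    (hv : hgt v = 0) : IsMotzkinPrefix w :=
  fun p hp => by simpa [hv] using h (v ++ p) ((List.prefix_append_right_inj v).mpr hp)

lemma IsMotzkin.of_append {v w : List Step} (h : IsMotzkin (v ++ w)) (hv : hgt v = 0) :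
    IsMotzkin w :=
  ⟨h.1.of_append hv, by simpa [hv] using h.2⟩

lemma exists_isMotzkin_append_D_eq {t : List Step} (ht : hgt t < 0) :
    ∃ A B, IsMotzkin A ∧ t = A ++ Step.D :: B := by
  classical
  have hP : ∃ n, hgt (t.take n) < 0 := ⟨t.length, by simpa using ht⟩
  obtain ⟨m, hm⟩ : ∃ m, Nat.find hP = m + 1 :=
    Nat.exists_eq_succ_of_ne_zero fun h => by simpa [h] using Nat.find_spec hP
  have hA : IsMotzkinPrefix (t.take m) := isMotzkinPrefix_iff_take.mpr fun n => by
    rw [List.take_take]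
    exact not_lt.mp (Nat.find_min hP (by omega))
  have h0 : 0 ≤ hgt (t.take m) := hA _ List.prefix_rfl
  have hlt : m < t.length := by
    by_contra! h
    rw [List.take_of_length_le h] at h0
    omega
  have hneg : hgt (t.take m) + t[m].val < 0 := by
    have := Nat.find_spec hP
    rwa [hm, List.take_add_one, List.getElem?_eq_getElem hlt, Option.toList_some, hgt_append,
      hgt_cons, hgt_nil, add_zero] at this
  have hD : t[m].val = -1 ∧ hgt (t.take m) = 0 := by
    have := t[m].neg_one_le_val
    omega
  refine ⟨t.take m, t.drop (m + 1), ⟨hA, hD.2⟩, ?_⟩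
  rw [← Step.val_eq_neg_one_iff.mp hD.1, ← List.drop_eq_getElem_cons hlt, List.take_append_drop]

lemma IsMotzkin.exists_first_return {t : List Step} (h : IsMotzkin (Step.U :: t)) :
    ∃ A B, IsMotzkin A ∧ IsMotzkin B ∧ t = A ++ Step.D :: B := by
  have ht : hgt t < 0 := by
    have := h.2
    simp only [hgt_cons, Step.val] at this
    omega
  obtain ⟨A, B, hA, rfl⟩ := exists_isMotzkin_append_D_eq ht
  refine ⟨A, B, hA, IsMotzkin.of_append (v := Step.U :: (A ++ [Step.D])) ?_ ?_, rfl⟩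
  · simpa using h
  · simp [hA.2, Step.val]

lemma length_le_of_append_D_eq {X Y rx ry : List Step} (hX : IsMotzkinPrefix X)
    (hY : hgt Y = 0) (h : X ++ Step.D :: rx = Y ++ Step.D :: ry) : X.length ≤ Y.length := by
  by_contra! hlt
  have hpre : Y ++ [Step.D] <+: X :=
    List.prefix_of_prefix_length_le (l₃ := X ++ Step.D :: rx) (by rw [h]; simp) (by simp)
      (by simpa using hlt)
  simpa [hY, Step.val] using hX _ hpre

lemma IsMotzkin.append_D_cancel {A₁ A₂ r₁ r₂ : List Step} (h₁ : IsMotzkin A₁)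
    (h₂ : IsMotzkin A₂) (h : A₁ ++ Step.D :: r₁ = A₂ ++ Step.D :: r₂) : A₁ = A₂ ∧ r₁ = r₂ := by
  have hlen : A₁.length = A₂.length :=
    (length_le_of_append_D_eq h₁.1 h₂.2 h).antisymm (length_le_of_append_D_eq h₂.1 h₁.2 h.symm)
  obtain ⟨hA, hr⟩ := List.append_inj h hlen
  exact ⟨hA, List.cons_injective hr⟩

lemma eq_nil_or_eq_cons_H_of_first_return {A B : List Step} (hA : hgt A = 0)
    (hw : IsMotzkinPrefix (Step.U :: (A ++ Step.D :: B)))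
    (hc : Cornerless (Step.U :: (A ++ Step.D :: B))) : B = [] ∨ ∃ B', B = Step.H :: B' := by
  rcases B with _ | ⟨_ | _ | _, B'⟩
  · exact .inl rfl
  · exact absurd ⟨Step.U :: A, B', by simp⟩ hc.2
  · exact .inr ⟨B', rfl⟩
  · refine absurd (IsMotzkinPrefix.of_append (v := Step.U :: (A ++ [Step.D])) ?_ ?_)
      (not_isMotzkinPrefix_cons_D B')
    · simpa using hw
    · simp [hA, Step.val]

/-- every nonempty cornerless Motzkin path can be written uniquely in
exactly one of the forms `HA`, `UA'D`, `UA'DHA` with `A` a cornerless Motzkin path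
and `A'` a nonempty cornerless Motzkin path. -/
theorem cornerless_motzkin_decomposition :
    ∀ w : List Step, IsMotzkin w → Cornerless w → w ≠ [] →
      ∃! d : List Step ⊕ List Step ⊕ List Step × List Step,
        match d with
        | Sum.inl A => (IsMotzkin A ∧ Cornerless A) ∧ w = Step.H :: A
        | Sum.inr (Sum.inl A') =>
            (IsMotzkin A' ∧ Cornerless A' ∧ A' ≠ []) ∧
              w = Step.U :: (A' ++ [Step.D])
        | Sum.inr (Sum.inr (A', A)) =>
            (IsMotzkin A' ∧ Cornerless A' ∧ A' ≠ []) ∧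
              (IsMotzkin A ∧ Cornerless A) ∧
              w = Step.U :: (A' ++ [Step.D, Step.H] ++ A) := by
  intro w hw hc hne
  obtain ⟨s, t, rfl⟩ := List.exists_cons_of_ne_nil hne
  cases s
  case D => exact absurd hw.1 (not_isMotzkinPrefix_cons_D t)
  case H =>
    refine ⟨.inl t, ⟨⟨hw.of_append (v := [Step.H]) rfl,
      hc.of_infix (List.suffix_cons _ _).isInfix⟩, rfl⟩, ?_⟩
    rintro (A | A' | ⟨A', A⟩) h <;> simp_all
  case U =>
    obtain ⟨A', B, hA', hB, rfl⟩ := hw.exists_first_return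
    have hcA' : Cornerless A' := hc.of_infix ⟨[Step.U], Step.D :: B, by simp⟩
    have hA'ne : A' ≠ [] := by
      rintro rfl
      exact hc.1 ⟨[], B, rfl⟩
    rcases eq_nil_or_eq_cons_H_of_first_return hA'.2 hw.1 hc with rfl | ⟨A, rfl⟩
    · refine ⟨.inr (.inl A'), ⟨⟨hA', hcA', hA'ne⟩, rfl⟩, ?_⟩
      rintro (A₀ | A₂ | ⟨A₂, A₀⟩) h <;>
        simp only [ne_eq, List.append_assoc, List.cons_append, List.nil_append, List.cons.injEq,
          List.append_cancel_right_eq, true_and, reduceCtorEq, false_and, and_false] at h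
      · simp [h.2]
      · simpa using (h.1.1.append_D_cancel hA' h.2.2.symm).2
    · have hcA : Cornerless A := hc.of_infix ⟨Step.U :: (A' ++ [Step.D, Step.H]), [], by simp⟩
      refine ⟨.inr (.inr (A', A)),
        ⟨⟨hA', hcA', hA'ne⟩, ⟨hB.of_append (v := [Step.H]) rfl, hcA⟩, by simp⟩, ?_⟩
      rintro (A₀ | A₂ | ⟨A₂, A₀⟩) h <;>
        simp only [ne_eq, List.append_assoc, List.cons_append, List.nil_append, List.cons.injEq,
          true_and, reduceCtorEq, false_and, and_false] at h
      · simpa using (h.1.1.append_D_cancel hA' h.2.symm).2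
      · simpa using h.1.1.append_D_cancel hA' h.2.2.symm
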